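/- arXiv:2404.10882 — 2 statements merged into one kernel-verified Lean document; each statement's English description precedes it below -/
import Mathlib

section
/- For c ∈ ℂ not equal to 0 or a negative integer, the operator L̃ = Σ_{j=1}^N z_j ∂/∂z_j + c extends to a linear homeomorphism from A^2_ξ(B^N) onto A^2_{ξ+2}(B^N). Concretely, on power series f(z) = Σ_β a^β z^β it acts by L̃f = Σ_β (c+|β|) a^β z^β, and there is a constant C > 0 with ((N+ξ+2)(N+ξ+1)/C)‖f‖_ξ^2 ≤ ‖L̃f‖_{ξ+2}^2 ≤ (N+ξ+2)(N+ξ+1)C‖f‖_ξ^2. -/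
set_option maxHeartbeats 1000000


open scoped BigOperators

/-- The squared Bergman norm of the monomial `z^β` in `A²_ξ(B^N)`:
`‖z^β‖_ξ² = Γ(N+ξ+1) β! / Γ(N+ξ+1+|β|)`. -/
noncomputable def monNormSq (N : ℕ) (ξ : ℝ) (β : Fin N → ℕ) : ℝ :=
  Real.Gamma (N + ξ + 1) * (∏ i, ((β i).factorial : ℝ)) /
    Real.Gamma (N + ξ + 1 + ∑ i, (β i : ℝ))


lemma monNormSq_pos (N : ℕ) (hN : 0 < N) (ξ : ℝ) (hξ : -1 < ξ) (β : Fin N → ℕ) :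
    0 < monNormSq N ξ β := by
  have hN1 : (1:ℝ) ≤ N := by exact_mod_cast hN
  have h1 : (0:ℝ) < N + ξ + 1 := by linarith
  have h2 : (0:ℝ) ≤ ∑ i, (β i : ℝ) := Finset.sum_nonneg fun i _ => by positivity
  unfold monNormSq
  apply div_pos
  · exact mul_pos (Real.Gamma_pos_of_pos h1)
      (Finset.prod_pos fun i _ => by positivity)
  · exact Real.Gamma_pos_of_pos (by linarith)

lemma monNormSq_shift (N : ℕ) (hN : 0 < N) (ξ : ℝ) (hξ : -1 < ξ) (β : Fin N → ℕ) :
    monNormSq N (ξ + 2) β =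
      ((N + ξ + 2) * (N + ξ + 1)) /
        ((N + ξ + 2 + ∑ i, (β i : ℝ)) * (N + ξ + 1 + ∑ i, (β i : ℝ))) *
        monNormSq N ξ β := by
  have hN1 : (1:ℝ) ≤ N := by exact_mod_cast hN
  set s := ∑ i, (β i : ℝ) with hs_def
  have hs : (0:ℝ) ≤ s := Finset.sum_nonneg fun i _ => by positivity
  have h1 : (0:ℝ) < N + ξ + 1 := by linarith
  have h1s : (0:ℝ) < N + ξ + 1 + s := by linarith
  have g1 : Real.Gamma ((N:ℝ) + (ξ + 2) + 1) =
      ((N + ξ + 2) * (N + ξ + 1)) * Real.Gamma (N + ξ + 1) := by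
    have e : (N:ℝ) + (ξ + 2) + 1 = ((N + ξ + 1) + 1) + 1 := by ring
    rw [e, Real.Gamma_add_one (by linarith : (0:ℝ) < (N + ξ + 1) + 1).ne',
      Real.Gamma_add_one h1.ne']
    ring
  have g2 : Real.Gamma ((N:ℝ) + (ξ + 2) + 1 + s) =
      ((N + ξ + 2 + s) * (N + ξ + 1 + s)) * Real.Gamma (N + ξ + 1 + s) := by
    have e : (N:ℝ) + (ξ + 2) + 1 + s = ((N + ξ + 1 + s) + 1) + 1 := by ring
    rw [e, Real.Gamma_add_one (by linarith : (0:ℝ) < (N + ξ + 1 + s) + 1).ne',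
      Real.Gamma_add_one h1s.ne']
    ring
  have hG2 : Real.Gamma ((N:ℝ) + ξ + 1 + s) ≠ 0 := (Real.Gamma_pos_of_pos h1s).ne'
  have hd1 : ((N:ℝ) + ξ + 2 + s) ≠ 0 := by linarith
  have hd2 : ((N:ℝ) + ξ + 1 + s) ≠ 0 := h1s.ne'
  unfold monNormSq
  rw [← hs_def, g1, g2]
  field_simp

lemma ratio_bounds (N : ℕ) (hN : 0 < N) (ξ : ℝ) (hξ : -1 < ξ)
    (c : ℂ) (hc : ∀ k : ℕ, c + (k : ℂ) ≠ 0) :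
    ∃ C > (0:ℝ), ∀ k : ℕ,
      (1 / C) * ((N + ξ + 2 + k) * (N + ξ + 1 + k)) ≤ ‖c + (k : ℂ)‖ ^ 2 ∧
      ‖c + (k : ℂ)‖ ^ 2 ≤ C * ((N + ξ + 2 + k) * (N + ξ + 1 + k)) := by
  have hN1 : (1:ℝ) ≤ N := by exact_mod_cast hN
  have hA : (0:ℝ) < N + ξ + 1 := by linarith
  have hD : ∀ k : ℕ, (0:ℝ) < (N + ξ + 2 + k) * (N + ξ + 1 + k) := by
    intro k
    have hkn : (0:ℝ) ≤ (k:ℝ) := Nat.cast_nonneg k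
    have h2 : (0:ℝ) < N + ξ + 2 + k := by linarith
    have h3 : (0:ℝ) < N + ξ + 1 + k := by linarith
    exact mul_pos h2 h3
  set K : ℕ := ⌈2 * ‖c‖⌉₊ + 1 with hK
  have hne : (Finset.range K).Nonempty := ⟨0, by simp [hK]⟩
  set m : ℝ := (Finset.range K).inf' hne
    (fun k => ‖c + (k : ℂ)‖ ^ 2 / ((N + ξ + 2 + k) * (N + ξ + 1 + k))) with hm
  have hm_pos : 0 < m := by
    rw [hm, Finset.lt_inf'_iff]
    intro k _
    have hk : (0:ℝ) < ‖c + (k:ℂ)‖ := norm_pos_iff.2 (hc k)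
    exact div_pos (by positivity) (hD k)
  set C₁ : ℝ := 2 * ‖c‖ ^ 2 / (N + ξ + 1) ^ 2 + 2 with hC1
  set C₂ : ℝ := 4 * (N + ξ + 3) ^ 2 with hC2
  have hA3 : (0:ℝ) < N + ξ + 3 := by linarith
  have hC2p : (0:ℝ) < C₂ := by rw [hC2]; positivity
  have hC1p : (0:ℝ) < C₁ := by positivity
  obtain ⟨C, hCdef⟩ : ∃ C : ℝ, C = max (max C₁ C₂) (1 / m) := ⟨_, rfl⟩
  have hCpos : 0 < C := by
    rw [hCdef]
    exact lt_max_iff.2 (Or.inl (lt_max_iff.2 (Or.inl hC1p)))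
  refine ⟨C, hCpos, fun k => ⟨?_, ?_⟩⟩
  · -- lower bound
    have h1C : 1 / C ≤ m := by
      rw [div_le_iff₀ hCpos]
      have h : 1 / m ≤ C := hCdef ▸ le_max_right _ _
      calc (1:ℝ) = m * (1/m) := by field_simp
        _ ≤ m * C := mul_le_mul_of_nonneg_left h hm_pos.le
    have h2C : 1 / C ≤ 1 / C₂ :=
      one_div_le_one_div_of_le hC2p (hCdef ▸ le_trans (le_max_right _ _) (le_max_left _ _))
    have hkn : (0:ℝ) ≤ (k:ℝ) := Nat.cast_nonneg k
    rcases lt_or_ge k K with hk | hk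
    · have hmem : k ∈ Finset.range K := Finset.mem_range.2 hk
      have hmk : m ≤ ‖c + (k:ℂ)‖ ^ 2 / ((N + ξ + 2 + k) * (N + ξ + 1 + k)) :=
        Finset.inf'_le _ hmem
      have h := le_trans h1C hmk
      rw [le_div_iff₀ (hD k)] at h
      linarith
    · have hk2 : 2 * ‖c‖ ≤ (k:ℝ) := by
        have h1 : ⌈2 * ‖c‖⌉₊ ≤ k := by omega
        calc 2 * ‖c‖ ≤ (⌈2 * ‖c‖⌉₊ : ℝ) := Nat.le_ceil _
          _ ≤ (k:ℝ) := by exact_mod_cast h1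
      have hk1 : (1:ℝ) ≤ (k:ℝ) := by
        have : 1 ≤ k := by omega
        exact_mod_cast this
      have hlow : (k:ℝ) / 2 ≤ ‖c + (k:ℂ)‖ := by
        have h := norm_sub_norm_le ((k:ℂ)) (-c)
        have e : (k:ℂ) - (-c) = c + k := by ring
        rw [e] at h
        have hnk : ‖(k:ℂ)‖ = (k:ℝ) := by simp
        have hnc : ‖(-c : ℂ)‖ = ‖c‖ := norm_neg c
        rw [hnk, hnc] at h
        linarith
      have hsq : (k:ℝ)^2 / 4 ≤ ‖c + (k:ℂ)‖ ^ 2 := by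
        nlinarith [norm_nonneg (c + (k:ℂ)), hlow]
      have e1 : (N:ℝ) + ξ + 2 + k ≤ (N + ξ + 3) * k := by nlinarith
      have e2 : (N:ℝ) + ξ + 1 + k ≤ (N + ξ + 3) * k := by nlinarith
      have hDle : ((N:ℝ) + ξ + 2 + k) * (N + ξ + 1 + k) ≤ (N + ξ + 3)^2 * (k:ℝ)^2 := by
        have h12 := mul_le_mul e1 e2 (by linarith) (by nlinarith)
        have hr : ((N:ℝ) + ξ + 3) * k * ((N + ξ + 3) * k) = (N + ξ + 3)^2 * (k:ℝ)^2 := by ring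
        linarith
      calc (1 / C) * ((N + ξ + 2 + k) * (N + ξ + 1 + k))
          ≤ (1 / C₂) * ((N + ξ + 2 + k) * (N + ξ + 1 + k)) :=
            mul_le_mul_of_nonneg_right h2C (hD k).le
        _ ≤ (1 / C₂) * ((N + ξ + 3)^2 * (k:ℝ)^2) :=
            mul_le_mul_of_nonneg_left hDle (one_div_pos.2 hC2p).le
        _ = (k:ℝ)^2 / 4 := by rw [hC2]; field_simp
        _ ≤ ‖c + (k:ℂ)‖ ^ 2 := hsq
  · -- upper bound
    have hCC1 : C₁ ≤ C := hCdef ▸ le_trans (le_max_left _ _) (le_max_left _ _)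
    have hkn : (0:ℝ) ≤ (k:ℝ) := Nat.cast_nonneg k
    have hup : ‖c + (k:ℂ)‖ ^ 2 ≤ 2 * ‖c‖^2 + 2 * (k:ℝ)^2 := by
      have h := norm_add_le c ((k:ℂ))
      have hnk : ‖(k:ℂ)‖ = (k:ℝ) := by simp
      rw [hnk] at h
      nlinarith [norm_nonneg (c + (k:ℂ)), norm_nonneg c, sq_nonneg (‖c‖ - (k:ℝ))]
    have hD1 : ((N:ℝ) + ξ + 1)^2 ≤ (N + ξ + 2 + k) * (N + ξ + 1 + k) := by nlinarith
    have hD2 : (k:ℝ)^2 ≤ (N + ξ + 2 + k) * (N + ξ + 1 + k) := by nlinarith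
    have hq : (0:ℝ) ≤ 2 * ‖c‖ ^ 2 / (N + ξ + 1) ^ 2 := by positivity
    have u1 : 2 * ‖c‖^2 ≤ (2 * ‖c‖ ^ 2 / (N + ξ + 1) ^ 2) * ((N + ξ + 2 + k) * (N + ξ + 1 + k)) := by
      have t1 : (2 * ‖c‖ ^ 2 / ((N:ℝ) + ξ + 1) ^ 2) * ((N:ℝ) + ξ + 1)^2 = 2 * ‖c‖^2 :=
        div_mul_cancel₀ _ (by positivity)
      calc 2 * ‖c‖^2 = (2 * ‖c‖ ^ 2 / ((N:ℝ) + ξ + 1) ^ 2) * ((N:ℝ) + ξ + 1)^2 := t1.symm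
        _ ≤ _ := mul_le_mul_of_nonneg_left hD1 hq
    have u2 : 2 * (k:ℝ)^2 ≤ 2 * ((N + ξ + 2 + k) * (N + ξ + 1 + k)) := by linarith
    have hfin : 2 * ‖c‖^2 + 2 * (k:ℝ)^2 ≤ C₁ * ((N + ξ + 2 + k) * (N + ξ + 1 + k)) := by
      rw [hC1]; nlinarith [u1, u2]
    calc ‖c + (k:ℂ)‖ ^ 2 ≤ C₁ * ((N + ξ + 2 + k) * (N + ξ + 1 + k)) := le_trans hup hfin
      _ ≤ C * ((N + ξ + 2 + k) * (N + ξ + 1 + k)) :=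
          mul_le_mul_of_nonneg_right hCC1 (hD k).le

lemma term_eq (N : ℕ) (hN : 0 < N) (ξ : ℝ) (hξ : -1 < ξ) (c : ℂ)
    (a : (Fin N → ℕ) → ℂ) (β : Fin N → ℕ) :
    ‖(c + (∑ i, (β i : ℂ))) * a β‖ ^ 2 * monNormSq N (ξ + 2) β =
      ((N + ξ + 2) * (N + ξ + 1)) *
        (‖c + ((∑ i, β i : ℕ) : ℂ)‖ ^ 2 /
          (((N:ℝ) + ξ + 2 + ((∑ i, β i : ℕ) : ℝ)) * ((N:ℝ) + ξ + 1 + ((∑ i, β i : ℕ) : ℝ)))) *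
        (‖a β‖ ^ 2 * monNormSq N ξ β) := by
  have hcast : (∑ i, (β i : ℂ)) = ((∑ i, β i : ℕ) : ℂ) := by
    rw [Nat.cast_sum]
  have hcastR : (∑ i, (β i : ℝ)) = ((∑ i, β i : ℕ) : ℝ) := by
    rw [Nat.cast_sum]
  rw [hcast, norm_mul, mul_pow, monNormSq_shift N hN ξ hξ β, hcastR]
  ring

/-- For `c ∈ ℂ` not equal to `0` or a negative integer, the operator
`L̃ = Σ_j z_j ∂/∂z_j + c`, acting on power series `f = Σ_β a^β z^β` by
`L̃f = Σ_β (c+|β|) a^β z^β`, extends to a linear homeomorphism from `A²_ξ(B^N)` onto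
`A²_{ξ+2}(B^N)`: there is `C > 0` with
`((N+ξ+2)(N+ξ+1)/C) ‖f‖_ξ² ≤ ‖L̃f‖_{ξ+2}² ≤ (N+ξ+2)(N+ξ+1) C ‖f‖_ξ²`,
and the map is bijective onto `A²_{ξ+2}(B^N)`. -/
theorem euler_operator_homeomorphism (N : ℕ) (hN : 0 < N) (ξ : ℝ) (hξ : -1 < ξ)
    (c : ℂ) (hc : ∀ k : ℕ, c + (k : ℂ) ≠ 0) :
    ∃ C > (0 : ℝ),
      (∀ a : (Fin N → ℕ) → ℂ,
        Summable (fun β => ‖a β‖ ^ 2 * monNormSq N ξ β) →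
          Summable
            (fun β => ‖(c + (∑ i, (β i : ℂ))) * a β‖ ^ 2 * monNormSq N (ξ + 2) β) ∧
          ((N + ξ + 2) * (N + ξ + 1) / C) * ∑' β, ‖a β‖ ^ 2 * monNormSq N ξ β ≤
            ∑' β, ‖(c + (∑ i, (β i : ℂ))) * a β‖ ^ 2 * monNormSq N (ξ + 2) β ∧
          ∑' β, ‖(c + (∑ i, (β i : ℂ))) * a β‖ ^ 2 * monNormSq N (ξ + 2) β ≤
            (N + ξ + 2) * (N + ξ + 1) * C * ∑' β, ‖a β‖ ^ 2 * monNormSq N ξ β) ∧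
      -- injectivity of `L̃` on coefficients
      (∀ a a' : (Fin N → ℕ) → ℂ,
        (∀ β, (c + (∑ i, (β i : ℂ))) * a β = (c + (∑ i, (β i : ℂ))) * a' β) → a = a') ∧
      -- surjectivity onto `A²_{ξ+2}(B^N)`
      (∀ b : (Fin N → ℕ) → ℂ,
        Summable (fun β => ‖b β‖ ^ 2 * monNormSq N (ξ + 2) β) →
          ∃ a : (Fin N → ℕ) → ℂ,
            Summable (fun β => ‖a β‖ ^ 2 * monNormSq N ξ β) ∧
            ∀ β, (c + (∑ i, (β i : ℂ))) * a β = b β) := by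
  obtain ⟨C, hCpos, hC⟩ := ratio_bounds N hN ξ hξ c hc
  have hN1 : (1:ℝ) ≤ N := by exact_mod_cast hN
  have hKξ : (0:ℝ) < (N + ξ + 2) * (N + ξ + 1) := by
    have h1 : (0:ℝ) < N + ξ + 1 := by linarith
    have h2 : (0:ℝ) < N + ξ + 2 := by linarith
    exact mul_pos h2 h1
  have hD : ∀ k : ℕ, (0:ℝ) < ((N:ℝ) + ξ + 2 + k) * ((N:ℝ) + ξ + 1 + k) := by
    intro k
    have hkn : (0:ℝ) ≤ (k:ℝ) := Nat.cast_nonneg k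
    have h2 : (0:ℝ) < N + ξ + 2 + k := by linarith
    have h3 : (0:ℝ) < N + ξ + 1 + k := by linarith
    exact mul_pos h2 h3
  -- ratio bounds in quotient form
  have hr : ∀ k : ℕ,
      1 / C ≤ ‖c + (k:ℂ)‖ ^ 2 / (((N:ℝ) + ξ + 2 + k) * ((N:ℝ) + ξ + 1 + k)) ∧
      ‖c + (k:ℂ)‖ ^ 2 / (((N:ℝ) + ξ + 2 + k) * ((N:ℝ) + ξ + 1 + k)) ≤ C := by
    intro k
    obtain ⟨h1, h2⟩ := hC k
    constructor
    · rw [le_div_iff₀ (hD k)]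
      linarith
    · rw [div_le_iff₀ (hD k)]
      linarith
  have hnz : ∀ β : Fin N → ℕ, c + (∑ i, (β i : ℂ)) ≠ 0 := by
    intro β
    rw [show (∑ i, (β i : ℂ)) = ((∑ i, β i : ℕ) : ℂ) from by rw [Nat.cast_sum]]
    exact hc _
  refine ⟨C, hCpos, ?_, ?_, ?_⟩
  · intro a ha
    set g : (Fin N → ℕ) → ℝ := fun β => ‖a β‖ ^ 2 * monNormSq N ξ β with hg
    set f : (Fin N → ℕ) → ℝ :=
      fun β => ‖(c + (∑ i, (β i : ℂ))) * a β‖ ^ 2 * monNormSq N (ξ + 2) β with hf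
    have hg_nonneg : ∀ β, 0 ≤ g β := fun β =>
      mul_nonneg (by positivity) (monNormSq_pos N hN ξ hξ β).le
    have hf_nonneg : ∀ β, 0 ≤ f β := fun β =>
      mul_nonneg (by positivity) (monNormSq_pos N hN (ξ + 2) (by linarith) β).le
    have hup : ∀ β, f β ≤ (N + ξ + 2) * (N + ξ + 1) * C * g β := by
      intro β
      rw [hf]
      simp only
      rw [term_eq N hN ξ hξ c a β]
      have h2 := (hr (∑ i, β i)).2
      exact mul_le_mul_of_nonneg_right
        (mul_le_mul_of_nonneg_left h2 hKξ.le) (hg_nonneg β)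
    have hlo : ∀ β, (N + ξ + 2) * (N + ξ + 1) / C * g β ≤ f β := by
      intro β
      rw [hf]
      simp only
      rw [term_eq N hN ξ hξ c a β]
      have h1 := (hr (∑ i, β i)).1
      have := mul_le_mul_of_nonneg_right
        (mul_le_mul_of_nonneg_left h1 hKξ.le) (hg_nonneg β)
      calc (N + ξ + 2) * (N + ξ + 1) / C * g β
          = (N + ξ + 2) * (N + ξ + 1) * (1 / C) * g β := by ring
        _ ≤ _ := this
    have hfs : Summable f :=
      Summable.of_nonneg_of_le hf_nonneg hup (ha.mul_left _)
    refine ⟨hfs, ?_, ?_⟩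
    · calc (N + ξ + 2) * (N + ξ + 1) / C * ∑' β, g β
          = ∑' β, (N + ξ + 2) * (N + ξ + 1) / C * g β := (tsum_mul_left).symm
        _ ≤ ∑' β, f β := Summable.tsum_le_tsum hlo (ha.mul_left _) hfs
    · calc ∑' β, f β
          ≤ ∑' β, (N + ξ + 2) * (N + ξ + 1) * C * g β := Summable.tsum_le_tsum hup hfs (ha.mul_left _)
        _ = (N + ξ + 2) * (N + ξ + 1) * C * ∑' β, g β := tsum_mul_left
  · intro a a' h
    funext β
    exact mul_left_cancel₀ (hnz β) (h β)
  · intro b hb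
    refine ⟨fun β => b β / (c + (∑ i, (β i : ℂ))), ?_, fun β => mul_div_cancel₀ _ (hnz β)⟩
    set a : (Fin N → ℕ) → ℂ := fun β => b β / (c + (∑ i, (β i : ℂ))) with ha
    have hab : ∀ β, (c + (∑ i, (β i : ℂ))) * a β = b β := fun β =>
      mul_div_cancel₀ _ (hnz β)
    have hg_nonneg : ∀ β, 0 ≤ ‖a β‖ ^ 2 * monNormSq N ξ β := fun β =>
      mul_nonneg (by positivity) (monNormSq_pos N hN ξ hξ β).le
    have key : ∀ β, ‖a β‖ ^ 2 * monNormSq N ξ β ≤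
        (C / ((N + ξ + 2) * (N + ξ + 1))) * (‖b β‖ ^ 2 * monNormSq N (ξ + 2) β) := by
      intro β
      have hfe : ‖b β‖ ^ 2 * monNormSq N (ξ + 2) β =
          ((N + ξ + 2) * (N + ξ + 1)) *
            (‖c + ((∑ i, β i : ℕ) : ℂ)‖ ^ 2 /
              (((N:ℝ) + ξ + 2 + ((∑ i, β i : ℕ) : ℝ)) * ((N:ℝ) + ξ + 1 + ((∑ i, β i : ℕ) : ℝ)))) *
            (‖a β‖ ^ 2 * monNormSq N ξ β) := by
        rw [← hab β]
        exact term_eq N hN ξ hξ c a β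
      have h1 := (hr (∑ i, β i)).1
      have hlo : (N + ξ + 2) * (N + ξ + 1) / C * (‖a β‖ ^ 2 * monNormSq N ξ β) ≤
          ‖b β‖ ^ 2 * monNormSq N (ξ + 2) β := by
        rw [hfe]
        have := mul_le_mul_of_nonneg_right
          (mul_le_mul_of_nonneg_left h1 hKξ.le) (hg_nonneg β)
        calc (N + ξ + 2) * (N + ξ + 1) / C * (‖a β‖ ^ 2 * monNormSq N ξ β)
            = (N + ξ + 2) * (N + ξ + 1) * (1 / C) * (‖a β‖ ^ 2 * monNormSq N ξ β) := by ring
          _ ≤ _ := this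
      have hpos : (0:ℝ) < C / ((N + ξ + 2) * (N + ξ + 1)) := div_pos hCpos hKξ
      calc ‖a β‖ ^ 2 * monNormSq N ξ β
          = (C / ((N + ξ + 2) * (N + ξ + 1))) *
              ((N + ξ + 2) * (N + ξ + 1) / C * (‖a β‖ ^ 2 * monNormSq N ξ β)) := by
            rw [← mul_assoc, div_mul_div_comm, mul_comm C,
              div_self (mul_ne_zero hKξ.ne' hCpos.ne'), one_mul]
        _ ≤ _ := mul_le_mul_of_nonneg_left hlo hpos.le
    exact Summable.of_nonneg_of_le hg_nonneg key (hb.mul_left _)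
end

section
/- For a positive definite 2×2 matrix T, the matrix I - ZZ* (with Z = [V | √T W_1] and T = I - VV*) is positive definite if and only if 1 - W_1*W_1 > 0, i.e. if and only if W_1 lies in the open unit ball of ℂ^2. -/
open Matrix
open scoped ComplexOrder

lemma posDef_conj_aux {n : Type*} [Fintype n] [DecidableEq n]
    {A : Matrix n n ℂ} (hA : A.PosDef) (B : Matrix n n ℂ) (hB : IsUnit B) :
    (Bᴴ * A * B).PosDef := by
  refine Matrix.PosDef.of_dotProduct_mulVec_pos (isHermitian_conjTranspose_mul_mul B hA.1) fun x hx => ?_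
  have h : B *ᵥ x ≠ 0 :=
    (Matrix.mulVec_injective_iff_isUnit.mpr hB |>.ne_iff' (by simp)).2 hx
  simpa only [star_mulVec, dotProduct_mulVec, vecMul_vecMul] using hA.dotProduct_mulVec_pos h

lemma posDef_conj_iff {n : Type*} [Fintype n] [DecidableEq n]
    (A : Matrix n n ℂ) (B : Matrix n n ℂ) (hB : IsUnit B) :
    (Bᴴ * A * B).PosDef ↔ A.PosDef := by
  refine ⟨fun h => ?_, fun h => posDef_conj_aux h B hB⟩
  have hB' : IsUnit B⁻¹ := (Matrix.isUnit_nonsing_inv_iff).mpr hB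
  have := posDef_conj_aux h B⁻¹ hB'
  have hinv : (B⁻¹)ᴴ * (Bᴴ * A * B) * B⁻¹ = A := by
    have h1 : (B⁻¹)ᴴ * Bᴴ = 1 := by
      rw [← conjTranspose_mul, Matrix.mul_nonsing_inv _ (isUnit_iff_isUnit_det _ |>.mp hB),
        conjTranspose_one]
    have h2 : B * B⁻¹ = 1 := Matrix.mul_nonsing_inv _ (isUnit_iff_isUnit_det _ |>.mp hB)
    calc (B⁻¹)ᴴ * (Bᴴ * A * B) * B⁻¹ = ((B⁻¹)ᴴ * Bᴴ) * A * (B * B⁻¹) := by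
          simp only [Matrix.mul_assoc]
      _ = A := by rw [h1, h2, Matrix.one_mul, Matrix.mul_one]
  rwa [hinv] at this

lemma quad_form_calc (W : Matrix (Fin 2) (Fin 1) ℂ) (x : Fin 2 → ℂ) :
    dotProduct (star x) ((1 - W * Wᴴ) *ᵥ x) =
      ((Complex.normSq (x 0) + Complex.normSq (x 1)
        - Complex.normSq ((starRingEnd ℂ) (W 0 0) * x 0
          + (starRingEnd ℂ) (W 1 0) * x 1) : ℝ) : ℂ) := by
  simp only [dotProduct, mulVec, Fin.sum_univ_two, Fin.sum_univ_one, Pi.star_apply,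
    Complex.star_def, Matrix.sub_apply, Matrix.one_apply, mul_apply, conjTranspose_apply]
  norm_num
  rw [Complex.ext_iff]
  constructor <;>
    simp only [Complex.normSq_apply, Complex.ofReal_re, Complex.ofReal_im, Complex.add_re,
      Complex.add_im, Complex.sub_re, Complex.sub_im, Complex.mul_re, Complex.mul_im,
      Complex.conj_re, Complex.conj_im, Complex.neg_re, Complex.neg_im, Complex.one_re,
      Complex.one_im] <;> ring

lemma rank_one_posdef_iff (W : Matrix (Fin 2) (Fin 1) ℂ) :
    (1 - W * Wᴴ).PosDef ↔ ∑ i, ‖W i 0‖ ^ 2 < 1 := by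
  have hsum : ∑ i, ‖W i 0‖ ^ 2 = Complex.normSq (W 0 0) + Complex.normSq (W 1 0) := by
    simp [Fin.sum_univ_two, Complex.sq_norm]
  rw [hsum]
  constructor
  · intro h
    by_contra hc
    push_neg at hc
    have hx : (fun i => W i 0) ≠ (0 : Fin 2 → ℂ) := by
      intro h0
      have h00 : W 0 0 = 0 := congrFun h0 0
      have h10 : W 1 0 = 0 := congrFun h0 1
      rw [h00, h10] at hc
      simp at hc
      linarith
    have := h.dotProduct_mulVec_pos hx
    rw [quad_form_calc] at this
    rw [Complex.zero_lt_real] at this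
    have e1 : (starRingEnd ℂ) (W 0 0) * W 0 0 + (starRingEnd ℂ) (W 1 0) * W 1 0
        = ((Complex.normSq (W 0 0) + Complex.normSq (W 1 0) : ℝ) : ℂ) := by
      push_cast
      rw [mul_comm, mul_comm ((starRingEnd ℂ) (W 1 0)), Complex.mul_conj, Complex.mul_conj]
    rw [e1, Complex.normSq_ofReal] at this
    set s := Complex.normSq (W 0 0) + Complex.normSq (W 1 0)
    nlinarith [this]
  · intro h
    refine Matrix.PosDef.of_dotProduct_mulVec_pos ?_ ?_
    · unfold Matrix.IsHermitian
      rw [conjTranspose_sub, conjTranspose_one, conjTranspose_mul, conjTranspose_conjTranspose]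
    · intro x hx
      rw [quad_form_calc, Complex.zero_lt_real]
      have h0 : x 0 ≠ 0 ∨ x 1 ≠ 0 := by
        by_contra hcon
        push_neg at hcon
        exact hx (funext fun i => by fin_cases i <;> simp [hcon.1, hcon.2])
      have hxpos : 0 < Complex.normSq (x 0) + Complex.normSq (x 1) := by
        rcases h0 with h0 | h0
        · have := Complex.normSq_pos.mpr h0
          have := Complex.normSq_nonneg (x 1); linarith
        · have := Complex.normSq_pos.mpr h0
          have := Complex.normSq_nonneg (x 0); linarith
      have key : (Complex.normSq (W 0 0) + Complex.normSq (W 1 0))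
            * (Complex.normSq (x 0) + Complex.normSq (x 1))
          = Complex.normSq ((starRingEnd ℂ) (W 0 0) * x 0 + (starRingEnd ℂ) (W 1 0) * x 1)
          + Complex.normSq (W 0 0 * x 1 - W 1 0 * x 0) := by
        simp only [Complex.normSq_apply, Complex.add_re, Complex.add_im, Complex.sub_re,
          Complex.sub_im, Complex.mul_re, Complex.mul_im, Complex.conj_re, Complex.conj_im]
        ring
      nlinarith [Complex.normSq_nonneg (W 0 0 * x 1 - W 1 0 * x 0),
        Complex.normSq_nonneg (W 0 0), Complex.normSq_nonneg (W 1 0)]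

/-- With `T = I - VV*` positive definite and `Z = [V | √T W₁]`, the matrix `I - ZZ*` is
positive definite if and only if `1 - W₁*W₁ > 0`, i.e. iff `W₁` lies in the open unit
ball of `ℂ²`. -/
theorem matrix_ball_posdef_iff
    (V W₁ : Matrix (Fin 2) (Fin 1) ℂ)
    (T : Matrix (Fin 2) (Fin 2) ℂ) (hT : T = 1 - V * Vᴴ) (hTpd : T.PosDef)
    (S : Matrix (Fin 2) (Fin 2) ℂ) (hS : S = (hTpd.posSemidef.1.eigenvectorUnitary : Matrix (Fin 2) (Fin 2) ℂ) *
      diagonal (fun i => ((Real.sqrt (hTpd.posSemidef.1.eigenvalues i) : ℝ) : ℂ)) *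
      (star hTpd.posSemidef.1.eigenvectorUnitary : Matrix (Fin 2) (Fin 2) ℂ))
    (Z : Matrix (Fin 2) (Fin 2) ℂ)
    (hZ : Z = Matrix.of fun i j => if j = 0 then V i 0 else (S * W₁) i 0) :
    (1 - Z * Zᴴ).PosDef ↔ ∑ i, ‖W₁ i 0‖ ^ 2 < 1 := by
  have hSherm : Sᴴ = S := by
    rw [hS, conjTranspose_mul, conjTranspose_mul, diagonal_conjTranspose]
    simp [Matrix.mul_assoc, ← Matrix.star_eq_conjTranspose, Pi.star_def, Complex.conj_ofReal]
  have hSS : S * S = T := by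
    rw [hS]
    have hU := Unitary.coe_star_mul_self hTpd.posSemidef.1.eigenvectorUnitary
    have hD : diagonal (fun i => ((Real.sqrt (hTpd.posSemidef.1.eigenvalues i) : ℝ) : ℂ)) *
        diagonal (fun i => ((Real.sqrt (hTpd.posSemidef.1.eigenvalues i) : ℝ) : ℂ)) =
        diagonal (RCLike.ofReal ∘ hTpd.posSemidef.1.eigenvalues) := by
      rw [diagonal_mul_diagonal]
      congr 1
      funext i
      simp only [Function.comp_apply]
      rw [← Complex.ofReal_mul, Real.mul_self_sqrt (hTpd.posSemidef.eigenvalues_nonneg i)]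
      rfl
    conv_rhs => rw [hTpd.posSemidef.1.spectral_theorem, Unitary.conjStarAlgAut_apply, ← hD]
    simp only [Matrix.mul_assoc]
    rw [← Matrix.mul_assoc _ (hTpd.posSemidef.1.eigenvectorUnitary : Matrix (Fin 2) (Fin 2) ℂ), hU, Matrix.one_mul]
  have hSunit : IsUnit S := by
    rw [Matrix.isUnit_iff_isUnit_det]
    have hdet : S.det * S.det = T.det := by rw [← det_mul, hSS]
    have hTdet : T.det ≠ 0 := ne_of_gt hTpd.det_pos
    have : S.det ≠ 0 := fun h0 => hTdet (by rw [← hdet, h0, zero_mul])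
    exact isUnit_iff_ne_zero.mpr this
  have hZZ : Z * Zᴴ = V * Vᴴ + (S * W₁) * (S * W₁)ᴴ := by
    ext i j
    simp only [hZ, mul_apply, conjTranspose_apply, Fin.sum_univ_two, Fin.sum_univ_one,
      Matrix.add_apply, Matrix.of_apply]
    norm_num
  have key : 1 - Z * Zᴴ = Sᴴ * (1 - W₁ * W₁ᴴ) * S := by
    rw [hZZ, hSherm]
    have h1 : (S * W₁)ᴴ = W₁ᴴ * S := by rw [conjTranspose_mul, hSherm]
    rw [h1]
    have : S * (1 - W₁ * W₁ᴴ) * S = S * S - S * W₁ * (W₁ᴴ * S) := by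
      rw [Matrix.mul_sub, Matrix.mul_one, Matrix.sub_mul]
      simp [Matrix.mul_assoc]
    rw [this, hSS, hT]
    abel
  rw [key, posDef_conj_iff _ _ hSunit]
  exact rank_one_posdef_iff W₁
end
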